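/- arXiv:hep-th/0304233 — 2 statements merged into one kernel-verified Lean document; each statement's English description precedes it below -/
import Mathlib

section
/- Define the symmetric bilinear form B on ℝ³ by B(x,y) = Σᵢ xᵢyᵢ - (1/2)(Σᵢ xᵢ)(Σᵢ yᵢ). For the vectors α₁ = e₁, α₂ = e₂ - e₁, α₃ = e₃ - e₂, the matrix A with entries Aᵢⱼ = 2·B(αᵢ,αⱼ)/B(αᵢ,αᵢ) equals [[2,-4,0],[-1,2,-1],[0,-1,2]]. -/
/-- The inverse DeWitt bilinear form on ℝ³. -/
noncomputable def dewittB (x y : Fin 3 → ℝ) : ℝ :=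
  (∑ i, x i * y i) - (1/2) * (∑ i, x i) * (∑ i, y i)

/-- The wall forms of D=4 Einstein-Maxwell: electric wall e₁ and symmetry walls. -/
noncomputable def emWalls : Fin 3 → (Fin 3 → ℝ) :=
  ![![1, 0, 0], ![-1, 1, 0], ![0, -1, 1]]

/-- The Cartan matrix computed from the dominant walls of D=4 Einstein-Maxwell theory
is the generalized Cartan matrix of A₂⁽²⁾∧. -/
theorem stmt_2 :
    (Matrix.of fun i j : Fin 3 =>
        2 * dewittB (emWalls i) (emWalls j) / dewittB (emWalls i) (emWalls i)) =
      !![2, -4, 0; -1, 2, -1; 0, -1, 2] := by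
  ext i j
  fin_cases i <;> fin_cases j <;>
    simp [dewittB, emWalls, Fin.sum_univ_three, Matrix.of_apply] <;> norm_num
end

section
/- Let B be the bilinear form on ℝ² ⊕ ℝ^r of the previous context, let θ be a vector in the dilaton subspace with B(θ,θ) = 2, let b ∈ ℝ² ⊕ ℝ^r be the B-dual of the coordinate functional β¹, and let w_S be the B-dual of the functional β² - β¹. Then: B(b - θ, b - θ) = 2; B(b - θ, σ) = -B(θ,σ) for every σ in the dilaton subspace; B(w_S, w_S) = 2; B(w_S, b - θ) = -1; and B(w_S, σ) = 0 for every σ in the dilaton subspace. -/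
/-- The metric in the space of scale factors (β¹,β²) and r dilatons in D=3. -/
noncomputable def scaleMetric (r : ℕ)
    (p q : (Fin 2 → ℝ) × (Fin r → ℝ)) : ℝ :=
  (∑ i, p.1 i * q.1 i) - (∑ i, p.1 i) * (∑ i, q.1 i) + ∑ a, p.2 a * q.2 a

lemma scaleMetric_comm (r : ℕ) (p q : (Fin 2 → ℝ) × (Fin r → ℝ)) :
    scaleMetric r p q = scaleMetric r q p := by
  simp [scaleMetric, mul_comm]

lemma scaleMetric_sub_left (r : ℕ) (p q w : (Fin 2 → ℝ) × (Fin r → ℝ)) :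
    scaleMetric r (p - q) w = scaleMetric r p w - scaleMetric r q w := by
  simp [scaleMetric, Fin.sum_univ_two, sub_mul, Finset.sum_sub_distrib]
  ring

lemma scaleMetric_sub_right (r : ℕ) (p q w : (Fin 2 → ℝ) × (Fin r → ℝ)) :
    scaleMetric r p (q - w) = scaleMetric r p q - scaleMetric r p w := by
  simp [scaleMetric, Fin.sum_univ_two, mul_sub, Finset.sum_sub_distrib]
  ring

/-- Scalar products of the dominant magnetic wall b - θ and the symmetry wall
w_S with themselves, each other, and the dilaton subspace: the magnetic wall
acts as the affine root and the symmetry wall as the overextended root. -/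
theorem stmt_15 (r : ℕ) (hr : 1 ≤ r)
    (θ b wS : (Fin 2 → ℝ) × (Fin r → ℝ))
    (hθ1 : θ.1 = 0) (hθ2 : scaleMetric r θ θ = 2)
    (hb : ∀ w, scaleMetric r b w = w.1 0)
    (hwS : ∀ w, scaleMetric r wS w = w.1 1 - w.1 0) :
    scaleMetric r (b - θ) (b - θ) = 2 ∧
    (∀ σ : (Fin 2 → ℝ) × (Fin r → ℝ), σ.1 = 0 →
      scaleMetric r (b - θ) σ = -scaleMetric r θ σ) ∧
    scaleMetric r wS wS = 2 ∧
    scaleMetric r wS (b - θ) = -1 ∧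
    (∀ σ : (Fin 2 → ℝ) × (Fin r → ℝ), σ.1 = 0 → scaleMetric r wS σ = 0) := by
  -- extract coordinates of b and wS using test vectors
  have he0 := hb (![1, 0], 0)
  have he1 := hb (![0, 1], 0)
  have hb0 : b.1 0 = 0 := by
    simp [scaleMetric, Fin.sum_univ_two] at he1
    linarith
  have hb1 : b.1 1 = -1 := by
    simp [scaleMetric, Fin.sum_univ_two] at he0
    linarith
  have hθ0 : θ.1 0 = 0 := by rw [hθ1]; rfl
  have hθ1' : θ.1 1 = 0 := by rw [hθ1]; rfl
  have hθb : scaleMetric r θ b = 0 := by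
    rw [scaleMetric_comm, hb θ, hθ0]
  refine ⟨?_, ?_, ?_, ?_, ?_⟩
  · rw [scaleMetric_sub_left, scaleMetric_sub_right, scaleMetric_sub_right, hb b, hb θ, hθb, hθ2,
      hθ0, hb0]
    ring
  · intro σ hσ
    rw [scaleMetric_sub_left, hb σ]
    rw [hσ]
    norm_num
  · rw [hwS wS]
    have h0 := hwS (![1,0],0)
    have h1 := hwS (![0,1],0)
    simp [scaleMetric, Fin.sum_univ_two] at h0 h1
    linarith
  · rw [hwS (b - θ)]
    simp [Prod.fst_sub, hb0, hb1, hθ0, hθ1']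
  · intro σ hσ
    rw [hwS σ, hσ]
    norm_num
end
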